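/- The map λ ↦ μ_λ, sending a Young diagram λ with k boxes to the polynomial μ_λ(g) = Π_{b ∈ λ} (2g − 2s_b + t_b) in g, is injective on the set of Young diagrams with k boxes. -/

import Mathlib

/-!
Writing `w_b = 2 s_b - t_b`, we have `μ_λ(g) = ∏_b (2g - w_b)`, so the polynomial `μ_λ`
determines the multiset of weights `w_b` (its roots are the `w_b / 2`). Conversely the weights
determine `λ`: the largest weight is `2(λ₁ - 1)`, attained at the end of the first row, and
removing the first row deletes the weights `0, 2, …, 2(λ₁ - 1)` and raises all others by one.
-/

/-- `μ_λ(g) = Π_{b ∈ λ} (2g − 2 s_b + t_b)` for the Young diagram with row lengths `L`. -/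
def muEigen (L : List ℕ) (g : ℤ) : ℤ :=
  ∏ t ∈ Finset.range L.length, ∏ s ∈ Finset.range (L.getD t 0),
    (2 * g - 2 * (s : ℤ) + (t : ℤ))

open Polynomial

theorem Polynomial.roots_multiset_prod_C_mul_X_sub_C {K : Type*} [Field K] {a : K} (ha : a ≠ 0)
    (S : Multiset K) : (S.map fun v => C a * X - C v).prod.roots = S.map (a⁻¹ * ·) := by
  rw [roots_multiset_prod, Multiset.bind_map]
  · simp only [roots_C_mul_X_sub_C _ ha, Multiset.bind_singleton]
  · simp only [Multiset.mem_map, not_exists, not_and]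
    intro v _ h
    simpa [ha] using congrArg (coeff · 1) h

theorem Multiset.eq_of_forall_prod_map_mul_sub_eq {a : ℤ} (ha : a ≠ 0) {S T : Multiset ℤ}
    (h : ∀ g : ℤ, (S.map (a * g - ·)).prod = (T.map (a * g - ·)).prod) : S = T := by
  let P : Multiset ℤ → ℚ[X] := fun S =>
    ((S.map ((↑) : ℤ → ℚ)).map fun v => C (a : ℚ) * X - C v).prod
  have eval_P (S : Multiset ℤ) (g : ℤ) : (P S).eval (g : ℚ) = (S.map (a * g - ·)).prod := by
    simp [P, eval_multiset_prod, Multiset.map_map]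
  have hP : P S = P T := by
    refine eq_of_infinite_eval_eq _ _ ((Set.infinite_range_of_injective Int.cast_injective).mono ?_)
    rintro _ ⟨g, rfl⟩
    simp only [Set.mem_ofPred_eq, eval_P, h]
  have ha' : (a : ℚ) ≠ 0 := Int.cast_ne_zero.mpr ha
  have hroots := congrArg roots hP
  rw [roots_multiset_prod_C_mul_X_sub_C ha', roots_multiset_prod_C_mul_X_sub_C ha'] at hroots
  exact Multiset.map_injective Int.cast_injective
    (Multiset.map_injective (mul_right_injective₀ (inv_ne_zero ha')) hroots)

/-- The weights `2 s_b - t_b` of the boxes, row by row: below the first row `t_b` is one larger. -/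
def weightedContents : List ℕ → Multiset ℤ
  | [] => 0
  | a :: L => (Multiset.range a).map (fun s : ℕ => 2 * (s : ℤ)) + (weightedContents L).map (· - 1)

theorem prod_rows_eq_prod_weightedContents (L : List ℕ) (c : ℤ) :
    ∏ t ∈ Finset.range L.length, ∏ s ∈ Finset.range (L.getD t 0), (c - 2 * (s : ℤ) + t)
      = ((weightedContents L).map (c - ·)).prod := by
  induction L generalizing c with
  | nil => simp [weightedContents]
  | cons a L ih =>
    have lower_rows : ∏ t ∈ Finset.range L.length,
        ∏ s ∈ Finset.range ((a :: L).getD (t + 1) 0), (c - 2 * (s : ℤ) + ↑(t + 1))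
          = (((weightedContents L).map (· - 1)).map (c - ·)).prod := by
      rw [Multiset.map_map, Function.comp_def]
      simp only [sub_sub_eq_add_sub, ← ih (c + 1), List.getD_cons_succ]
      refine Finset.prod_congr rfl fun t _ => Finset.prod_congr rfl fun s _ => ?_
      push_cast
      ring
    have top_row : ∏ s ∈ Finset.range a, (c - 2 * (s : ℤ) + ↑(0 : ℕ))
        = (((Multiset.range a).map (fun s : ℕ => 2 * (s : ℤ))).map (c - ·)).prod := by
      simp [Finset.prod_eq_multiset_prod, Multiset.map_map]
    rw [List.length_cons, Finset.prod_range_succ', lower_rows, List.getD_cons_zero, top_row,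
      weightedContents, Multiset.map_add, Multiset.prod_add, mul_comm]

theorem muEigen_eq_prod_weightedContents (L : List ℕ) (g : ℤ) :
    muEigen L g = ((weightedContents L).map (2 * g - ·)).prod :=
  prod_rows_eq_prod_weightedContents L (2 * g)

theorem le_of_mem_weightedContents {L : List ℕ} {c : ℕ} (hc : ∀ x ∈ L, x ≤ c) {v : ℤ}
    (hv : v ∈ weightedContents L) : v + 2 ≤ 2 * c := by
  induction L generalizing v with
  | nil => simp [weightedContents] at hv
  | cons a L ih =>
    rw [List.forall_mem_cons] at hc
    simp only [weightedContents, Multiset.mem_add, Multiset.mem_map, Multiset.mem_range] at hv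
    rcases hv with ⟨s, hs, rfl⟩ | ⟨w, hw, rfl⟩
    · omega
    · linarith [ih hc.2 hw]

theorem mem_weightedContents_cons {a : ℕ} (ha : 0 < a) (L : List ℕ) :
    2 * (a : ℤ) - 2 ∈ weightedContents (a :: L) :=
  Multiset.mem_add.2 <| .inl <| Multiset.mem_map.2 ⟨a - 1, Multiset.mem_range.2 (by omega), by omega⟩

theorem eq_of_weightedContents_eq {L M : List ℕ}
    (hL : L.Pairwise (· ≥ ·)) (hLpos : ∀ x ∈ L, 0 < x)
    (hM : M.Pairwise (· ≥ ·)) (hMpos : ∀ x ∈ M, 0 < x)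
    (h : weightedContents L = weightedContents M) : L = M := by
  induction L generalizing M with
  | nil =>
    cases M with
    | nil => rfl
    | cons b M =>
      have top_mem := h ▸ mem_weightedContents_cons (hMpos b List.mem_cons_self) M
      simp [weightedContents] at top_mem
  | cons a L ih =>
    cases M with
    | nil =>
      have top_mem := h ▸ mem_weightedContents_cons (hLpos a List.mem_cons_self) L
      simp [weightedContents] at top_mem
    | cons b M =>
      rw [List.pairwise_cons] at hL hM
      rw [List.forall_mem_cons] at hLpos hMpos
      have hab : a = b := by
        have h₁ := le_of_mem_weightedContents (List.forall_mem_cons.2 ⟨le_rfl, hM.1⟩)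
          (h ▸ mem_weightedContents_cons hLpos.1 L)
        have h₂ := le_of_mem_weightedContents (List.forall_mem_cons.2 ⟨le_rfl, hL.1⟩)
          (h ▸ mem_weightedContents_cons hMpos.1 M)
        omega
      subst hab
      rw [weightedContents, weightedContents] at h
      rw [ih hL.2 hLpos.2 hM.2 hMpos.2 (Multiset.map_injective sub_left_injective
        (add_left_cancel h))]

theorem muEigen_injective_general (L M : List ℕ)
    (hL : L.Pairwise (· ≥ ·)) (hLpos : ∀ x ∈ L, 0 < x)
    (hM : M.Pairwise (· ≥ ·)) (hMpos : ∀ x ∈ M, 0 < x)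
    (h : ∀ g : ℤ, muEigen L g = muEigen M g) :
    L = M := by
  refine eq_of_weightedContents_eq hL hLpos hM hMpos
    (Multiset.eq_of_forall_prod_map_mul_sub_eq two_ne_zero fun g => ?_)
  rw [← muEigen_eq_prod_weightedContents, ← muEigen_eq_prod_weightedContents, h g]

/-- The map `λ ↦ μ_λ` is injective on Young diagrams with `k` boxes: two Young diagrams
with `k` boxes whose polynomials `μ_λ` agree (as polynomials in `g`, i.e. at every
integer value of `g`) are equal. -/
theorem muEigen_injective (k : ℕ) (L M : List ℕ)
    (hL : L.Pairwise (· ≥ ·)) (hLpos : ∀ x ∈ L, 0 < x) (hLsum : L.sum = k)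
    (hM : M.Pairwise (· ≥ ·)) (hMpos : ∀ x ∈ M, 0 < x) (hMsum : M.sum = k)
    (h : ∀ g : ℤ, muEigen L g = muEigen M g) :
    L = M :=
  muEigen_injective_general L M hL hLpos hM hMpos h
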